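/- Conversely to the lifting convolution equivariance: if f₁(k·y, k·h) = f₁(y, h) holds for all y ∈ ℤ³, h ∈ H, and all kernels φ : ℤ³ → ℝ with finite support, where f₁(y, h) = Σ_x f₀(x) φ(h⁻¹(x − y)), then f₀(k·x) = f₀(x) for all x ∈ ℤ³. -/
import Mathlib


/-- Converse to lifting-convolution equivariance: if
`f₁(k·y, k·h) = f₁(y,h)` for all finitely supported kernels `φ`, then `k`
stabilizes `f₀`. -/
theorem stmt_8 {H : Type*} [Group H] [Fintype H]
    (ρ : H →* ((Fin 3 → ℤ) ≃ₗ[ℤ] (Fin 3 → ℤ)))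
    (f₀ : (Fin 3 → ℤ) → ℝ) (hf₀ : (Function.support f₀).Finite)
    (k : H)
    (hk : ∀ (φ : (Fin 3 → ℤ) → ℝ), (Function.support φ).Finite →
      ∀ (y : Fin 3 → ℤ) (h : H),
        (∑ᶠ x : Fin 3 → ℤ, f₀ x * φ (ρ (k * h)⁻¹ (x - ρ k y)))
          = ∑ᶠ x : Fin 3 → ℤ, f₀ x * φ (ρ h⁻¹ (x - y))) :
    ∀ x : Fin 3 → ℤ, f₀ (ρ k x) = f₀ x := by
  intro y
  set φ : (Fin 3 → ℤ) → ℝ := fun z => if z = 0 then 1 else 0 with hφ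
  have hφval : ∀ z, φ z = if z = 0 then 1 else 0 := fun z => rfl
  have hfin : (Function.support φ).Finite := by
    apply Set.Finite.subset (Set.finite_singleton (0 : Fin 3 → ℤ))
    intro z hz
    rw [Function.mem_support] at hz
    rw [Set.mem_singleton_iff]
    by_contra h
    exact hz (by rw [hφval, if_neg h])
  have key : ∀ (y : Fin 3 → ℤ) (h : H),
      (∑ᶠ x : Fin 3 → ℤ, f₀ x * φ (ρ h⁻¹ (x - y))) = f₀ y := by
    intro y h
    rw [finsum_eq_single _ y]
    · rw [sub_self, map_zero, hφval, if_pos rfl, mul_one]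
    · intro x hx
      have hne : ρ h⁻¹ (x - y) ≠ 0 := by
        simp only [ne_eq, LinearEquiv.map_eq_zero_iff, sub_eq_zero]
        exact hx
      rw [hφval, if_neg hne, mul_zero]
  have heq := hk φ hfin y 1
  rw [key y 1] at heq
  rw [← heq, finsum_eq_single _ (ρ k y)]
  · rw [sub_self, map_zero, hφval, if_pos rfl, mul_one]
  · intro x hx
    have hne : ρ (k * 1)⁻¹ (x - ρ k y) ≠ 0 := by
      simp only [ne_eq, LinearEquiv.map_eq_zero_iff, sub_eq_zero]
      exact hx
    rw [hφval, if_neg hne, mul_zero]
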